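/- Fix a real number 0 < t < 1 and a real number p > 0. Let w be a Dyck word of semilength ℓ (a sequence of ℓ up-steps and ℓ down-steps in which every prefix contains at least as many up-steps as down-steps), and let O(w) be the operator on Fock space obtained by replacing each up-step by a and each down-step by a†, composing the resulting letters so that the written product is read left to right (the rightmost letter acts first). For 1 ≤ i ≤ ℓ let m_i(w) be the number of matched up–down pairs of w whose nesting depth is i (i.e., that are enclosed by exactly i−1 other matched pairs). Then for every n ∈ ℕ the diagonal coefficient satisfies ⟨e_n, O(w)·k^{p}·e_n⟩ = t^{p·n}·Π_{i=1}^{ℓ} (1 − t^{n+i})^{m_i(w)}, and consequently the trace Tr[O(w)·k^{p}] = Σ_{n=0}^{∞} ⟨e_n, O(w)·k^{p}·e_n⟩ converges and equals Σ_{n=0}^{∞} t^{p·n}·Π_{i=1}^{ℓ} (1 − t^{n+i})^{m_i(w)}. -/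
import Mathlib


/-!
STATEMENT 16 (Lemma 8.1): for a Dyck word `w` of semilength `ℓ` (up-steps `true`, replaced
by `a`; down-steps `false`, replaced by `a†`; the written product is read left to right, the
rightmost letter acting first), the diagonal coefficients of `O(w)·k^p` on Fock space are
`⟨e_n, O(w)·k^p·e_n⟩ = t^{p·n}·Π_{i=1}^{ℓ} (1 − t^{n+i})^{m_i(w)}`, where `m_i(w)` is the
number of matched up–down pairs of `w` of nesting depth `i`; consequently
`Tr[O(w)·k^p] = Σ_n ⟨e_n, O(w)·k^p·e_n⟩` converges and equals
`Σ_n t^{p·n}·Π_{i=1}^{ℓ} (1 − t^{n+i})^{m_i(w)}`.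

The nesting depth of a matched pair equals the height reached by its opening up-step, so
`m_i(w) = #\{j : w_j` is an up-step with (ups before `j`) + 1 − (downs before `j`) `= i\}`.
-/

open scoped BigOperators

noncomputable section

/-- The Fock space: finitely supported functions on `ℕ`. -/
abbrev Fock1 : Type := ℕ →₀ ℝ

/-- The annihilation operator: `a·e_n = √(1−t^n)·e_{n−1}` (so `a·e_0 = 0`). -/
def aOp1 (t : ℝ) : Module.End ℝ Fock1 :=
  Finsupp.lsum ℝ fun n => Real.sqrt (1 - t ^ n) • Finsupp.lsingle (n - 1)

/-- The creation operator: `a†·e_n = √(1−t^{n+1})·e_{n+1}`. -/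
def adOp1 (t : ℝ) : Module.End ℝ Fock1 :=
  Finsupp.lsum ℝ fun n => Real.sqrt (1 - t ^ (n + 1)) • Finsupp.lsingle (n + 1)

/-- The operator `k^p` (real power): `k^p·e_n = t^{p·n}·e_n`. -/
def kPow (t p : ℝ) : Module.End ℝ Fock1 :=
  Finsupp.lsum ℝ fun n => (t ^ (p * (n : ℝ))) • Finsupp.lsingle n

/-- `O(w)`: replace each up-step (`true`) of `w` by `a` and each down-step (`false`) by
`a†`, and compose so that the written word is read left to right (rightmost acts first). -/
def Ow (t : ℝ) (w : List Bool) : Module.End ℝ Fock1 :=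
  (w.map fun b => if b then aOp1 t else adOp1 t).prod

/-- `m_i(w)`: the number of matched up–down pairs of `w` of nesting depth `i`, i.e. the
number of up-steps whose height after stepping (ups before it, plus one, minus downs
before it) equals `i`. -/
def mDepth (w : List Bool) (i : ℕ) : ℕ :=
  ((Finset.range w.length).filter fun j =>
    w.getD j false = true ∧ (w.take j).count true + 1 - (w.take j).count false = i).card

/-! ### auxiliary lemmas -/

lemma aOp1_single (t : ℝ) (m : ℕ) :
    aOp1 t (Finsupp.single m 1) = Real.sqrt (1 - t ^ m) • Finsupp.single (m - 1) 1 := by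
  simp [aOp1]

lemma adOp1_single (t : ℝ) (m : ℕ) :
    adOp1 t (Finsupp.single m 1) = Real.sqrt (1 - t ^ (m+1)) • Finsupp.single (m + 1) 1 := by
  simp [adOp1]

lemma kPow_single (t p : ℝ) (m : ℕ) :
    kPow t p (Finsupp.single m 1) = (t ^ (p * (m:ℝ))) • Finsupp.single m 1 := by
  simp [kPow]

lemma Ow_nil (t : ℝ) : Ow t [] = 1 := by simp [Ow]

lemma Ow_cons (t : ℝ) (b : Bool) (w : List Bool) :
    Ow t (b :: w) = (if b then aOp1 t else adOp1 t) * Ow t w := by simp [Ow]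

lemma Ow_append (t : ℝ) (u v : List Bool) : Ow t (u ++ v) = Ow t u * Ow t v := by
  simp [Ow]

lemma lemA (t : ℝ) : ∀ (v : List Bool),
    (∀ j, ((v.drop j).count true) ≤ (v.drop j).count false) → ∀ n : ℕ,
    ∃ c : ℝ, Ow t v (Finsupp.single n 1)
      = c • Finsupp.single (n + (v.count false - v.count true)) 1 := by
  intro v
  induction v with
  | nil => intro _ n; exact ⟨1, by simp [Ow_nil]⟩
  | cons b v ih =>
    intro hsuf n
    obtain ⟨c, hc⟩ := ih (fun j => hsuf (j+1)) n
    have h0 := hsuf 0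
    cases b with
    | false =>
      have h1 := hsuf 1
      simp at h1
      refine ⟨c * Real.sqrt (1 - t ^ (n + (v.count false - v.count true) + 1)), ?_⟩
      rw [Ow_cons]
      simp only [Bool.false_eq_true, if_false, Module.End.mul_apply, hc, map_smul,
        adOp1_single, smul_smul]
      congr 2
      rw [List.count_cons_self, List.count_cons_of_ne (by decide)]
      omega
    | true =>
      simp [List.count_cons] at h0
      refine ⟨c * Real.sqrt (1 - t ^ (n + (v.count false - v.count true))), ?_⟩
      rw [Ow_cons]
      simp only [if_true, Module.End.mul_apply, hc, map_smul, aOp1_single, smul_smul]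
      congr 2
      rw [List.count_cons_self, List.count_cons_of_ne (by decide)]
      omega

lemma mDepth_eq_sum (w : List Bool) (i : ℕ) : mDepth w i
    = ∑ j ∈ Finset.range w.length,
        if (w.getD j false = true ∧ (w.take j).count true + 1 - (w.take j).count false = i)
        then 1 else 0 := Finset.card_filter _ _

lemma sum_range_add' (f : ℕ → ℕ) (n m : ℕ) :
    ∑ i ∈ Finset.range (n+m), f i
      = (∑ i ∈ Finset.range n, f i) + ∑ i ∈ Finset.range m, f (n+i) := by
  rw [Finset.range_add, Finset.sum_union (by simp [Finset.disjoint_left]; omega),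
    Finset.sum_map]
  simp [addLeftEmbedding]

lemma mDepth_removal (u v : List Bool) (i : ℕ) :
    mDepth (u ++ true :: false :: v) i
      = mDepth (u ++ v) i + (if u.count true + 1 - u.count false = i then 1 else 0) := by
  have h1 : (u ++ true :: false :: v).length = u.length + (2 + v.length) := by simp; omega
  have h2 : (u ++ v).length = u.length + v.length := by simp
  rw [mDepth_eq_sum, mDepth_eq_sum, h1, h2, sum_range_add', sum_range_add',
    sum_range_add']
  have e1 : ∀ j ∈ Finset.range u.length,
      (if ((u ++ true :: false :: v).getD j false = true ∧
          ((u ++ true :: false :: v).take j).count true + 1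
            - ((u ++ true :: false :: v).take j).count false = i) then 1 else 0)
      = (if ((u ++ v).getD j false = true ∧
          ((u ++ v).take j).count true + 1 - ((u ++ v).take j).count false = i)
         then 1 else 0) := by
    intro j hj
    rw [Finset.mem_range] at hj
    have ht : ∀ x : List Bool, (u ++ x).take j = u.take j := by
      intro x
      rw [List.take_append, Nat.sub_eq_zero_of_le hj.le]
      simp
    rw [ht, ht, List.getD_append _ _ _ _ hj, List.getD_append _ _ _ _ hj]
  have e3 : ∀ j ∈ Finset.range v.length,
      (if ((u ++ true :: false :: v).getD (u.length + (2 + j)) false = true ∧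
          ((u ++ true :: false :: v).take (u.length + (2 + j))).count true + 1
            - ((u ++ true :: false :: v).take (u.length + (2 + j))).count false = i)
        then 1 else 0)
      = (if ((u ++ v).getD (u.length + j) false = true ∧
          ((u ++ v).take (u.length + j)).count true + 1
            - ((u ++ v).take (u.length + j)).count false = i) then 1 else 0) := by
    intro j hj
    have ht1 : (u ++ true :: false :: v).take (u.length + (2 + j))
        = u ++ true :: false :: v.take j := by
      rw [List.take_append, List.take_of_length_le (by omega),
        Nat.add_sub_cancel_left, Nat.add_comm 2 j]
      rfl
    have ht2 : (u ++ v).take (u.length + j) = u ++ v.take j := by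
      rw [List.take_append, List.take_of_length_le (by omega),
        Nat.add_sub_cancel_left]
    have hg1 : (u ++ true :: false :: v).getD (u.length + (2 + j)) false
        = v.getD j false := by
      rw [List.getD_append_right _ _ _ _ (by omega), Nat.add_sub_cancel_left,
        Nat.add_comm 2 j]
      rfl
    have hg2 : (u ++ v).getD (u.length + j) false = v.getD j false := by
      rw [List.getD_append_right _ _ _ _ (by omega), Nat.add_sub_cancel_left]
    rw [ht1, ht2, hg1, hg2]
    simp only [List.count_append, List.count_cons, List.count_nil]
    refine if_congr (and_congr_right fun _ => ?_) rfl rfl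
    constructor <;> intro h <;> (simp at *; omega)
  have eL : (if ((u ++ true :: false :: v).getD (u.length + 0) false = true ∧
        ((u ++ true :: false :: v).take (u.length + 0)).count true + 1
          - ((u ++ true :: false :: v).take (u.length + 0)).count false = i)
      then 1 else 0)
      = (if u.count true + 1 - u.count false = i then 1 else 0) := by
    rw [Nat.add_zero, List.getD_append_right _ _ _ _ le_rfl, Nat.sub_self,
      List.take_append, List.take_of_length_le le_rfl, Nat.sub_self]
    simp
  have eL1 : (if ((u ++ true :: false :: v).getD (u.length + 1) false = true ∧
        ((u ++ true :: false :: v).take (u.length + 1)).count true + 1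
          - ((u ++ true :: false :: v).take (u.length + 1)).count false = i)
      then 1 else 0) = 0 := by
    rw [List.getD_append_right _ _ _ _ (by omega), Nat.add_sub_cancel_left]
    simp
  rw [Finset.sum_congr rfl e1, Finset.sum_congr rfl e3, Finset.sum_range_succ,
    Finset.sum_range_one, eL, eL1]
  omega

lemma count_tf_length (l : List Bool) : l.count true + l.count false = l.length := by
  induction l with
  | nil => simp
  | cons b l ih => cases b <;> simp [List.count_cons] <;> omega

lemma split_TF : ∀ (w : List Bool), false ∈ w → w.getD 0 false = true →
    ∃ u v, w = u ++ true :: false :: v := by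
  intro w
  induction w with
  | nil => simp
  | cons b w ih =>
    intro hmem hget
    have hb : b = true := hget
    subst hb
    cases w with
    | nil => simp at hmem
    | cons c w' =>
      cases c with
      | false => exact ⟨[], w', rfl⟩
      | true =>
        obtain ⟨u, v, huv⟩ := ih (by simpa using hmem) rfl
        exact ⟨true :: u, v, by rw [List.cons_append, huv]⟩

lemma suffix_cond (w : List Bool) (hbal : w.count true = w.count false)
    (hpre : ∀ j, (w.take j).count false ≤ (w.take j).count true) :
    ∀ m, ((w.drop m).count true) ≤ (w.drop m).count false := by
  intro m
  have h := hpre m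
  have ht : (w.take m).count true + (w.drop m).count true = w.count true := by
    rw [← List.count_append, List.take_append_drop]
  have hf : (w.take m).count false + (w.drop m).count false = w.count false := by
    rw [← List.count_append, List.take_append_drop]
  omega

lemma lemB (t : ℝ) (ht0 : 0 < t) (ht1 : t < 1) :
    ∀ N : ℕ, ∀ w : List Bool, w.length ≤ N →
    w.count true = w.count false →
    (∀ j, (w.take j).count false ≤ (w.take j).count true) →
    ∀ L : ℕ, w.count true ≤ L → ∀ n : ℕ,
    Ow t w (Finsupp.single n 1)
      = (∏ i ∈ Finset.Icc 1 L, (1 - t ^ (n + i)) ^ (mDepth w i)) • Finsupp.single n 1 := by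
  intro N
  induction N with
  | zero =>
    intro w hw _ _ L _ n
    have : w = [] := List.eq_nil_of_length_eq_zero (by omega)
    subst this
    simp [Ow_nil, mDepth]
  | succ N ih =>
    intro w hw hbal hpre L hL n
    by_cases hnil : w = []
    · subst hnil
      simp [Ow_nil, mDepth]
    · -- decompose
      have hfalse : false ∈ w := by
        by_contra h
        have h0 : w.count false = 0 := List.count_eq_zero.2 h
        have := count_tf_length w
        have : w.length = 0 := by omega
        exact hnil (List.eq_nil_of_length_eq_zero this)
      have hget : w.getD 0 false = true := by
        cases w with
        | nil => exact absurd rfl hnil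
        | cons b w' =>
          cases b with
          | true => rfl
          | false =>
            have := hpre 1
            simp [List.count_cons] at this
      obtain ⟨u, v, rfl⟩ := split_TF w hfalse hget
      -- basic count facts
      have hcu : u.count false ≤ u.count true := by
        have := hpre u.length
        rwa [List.take_left] at this
      have hbal' : u.count true + (v.count true + 1)
          = u.count false + (v.count false + 1) := by
        simpa [List.count_append, List.count_cons] using hbal
      have hctv : v.count true ≤ v.count false := by
        have := suffix_cond _ hbal hpre (u.length + 2)
        rwa [List.drop_append, List.drop_of_length_le (by omega),
          Nat.add_sub_cancel_left, List.nil_append, show (true:Bool)::false::v = [true,false]++v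
            from rfl, List.drop_append, List.drop_of_length_le (by simp),
          List.nil_append, List.length_cons, List.length_cons, List.length_nil,
          Nat.sub_self, List.drop_zero] at this
      -- suffix condition for v
      have hsufv : ∀ j, ((v.drop j).count true) ≤ (v.drop j).count false := by
        intro j
        have h := suffix_cond _ hbal hpre (u.length + (2 + j))
        rwa [List.drop_append, List.drop_of_length_le (by omega),
          Nat.add_sub_cancel_left, List.nil_append, Nat.add_comm 2 j,
          show ((true:Bool)::false::v).drop (j+2) = v.drop j from rfl] at h
      obtain ⟨c, hc⟩ := lemA t v hsufv n
      set m : ℕ := n + (v.count false - v.count true) with hm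
      have hsq : (0:ℝ) ≤ 1 - t ^ (m+1) := by
        have : t ^ (m+1) ≤ 1 := pow_le_one₀ ht0.le ht1.le
        linarith
      have key : Ow t (u ++ true :: false :: v) (Finsupp.single n 1)
          = (1 - t ^ (m+1)) • (Ow t (u ++ v) (Finsupp.single n 1)) := by
        have hOw : Ow t (u ++ true :: false :: v)
            = Ow t u * (aOp1 t * (adOp1 t * Ow t v)) := by
          rw [Ow_append, Ow_cons, Ow_cons]
          simp [mul_assoc]
        have hss : Real.sqrt (1 - t ^ (m+1)) * Real.sqrt (1 - t ^ (m+1))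
            = 1 - t ^ (m+1) := Real.mul_self_sqrt hsq
        rw [hOw, Ow_append]
        simp only [Module.End.mul_apply, hc, map_smul, adOp1_single, aOp1_single,
          Nat.add_sub_cancel, smul_smul]
        congr 1
        linear_combination c * hss
      have hw' : (u ++ v).length ≤ N := by
        simp only [List.length_append, List.length_cons] at hw ⊢
        omega
      have hbal'' : (u ++ v).count true = (u ++ v).count false := by
        simp only [List.count_append]
        omega
      have hpre' : ∀ j, ((u ++ v).take j).count false ≤ ((u ++ v).take j).count true := by
        intro j
        rcases le_or_gt j u.length with hj | hj
        · have heq : (u ++ v).take j = (u ++ true :: false :: v).take j := by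
            rw [List.take_append, List.take_append,
              Nat.sub_eq_zero_of_le hj]
            simp
          rw [heq]
          exact hpre j
        · have h := hpre (j + 2)
          rw [List.take_append, List.take_of_length_le (by omega),
            show j + 2 - u.length = (j - u.length) + 2 by omega,
            show ∀ k, ((true:Bool)::false::v).take (k+2) = true :: false :: v.take k
              from fun k => rfl] at h
          rw [List.take_append, List.take_of_length_le (by omega)]
          simp only [List.count_append, List.count_cons, List.count_nil] at h ⊢
          simp at h
          omega
      have hL' : (u ++ v).count true ≤ L := by
        simp only [List.count_append, List.count_cons] at hL ⊢
        simp at hL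
        omega
      rw [key, ih (u ++ v) hw' hbal'' hpre' L hL' n, smul_smul]
      congr 1
      have hprod : ∀ i ∈ Finset.Icc 1 L,
          (1 - t ^ (n + i)) ^ (mDepth (u ++ true :: false :: v) i)
          = (1 - t ^ (n + i)) ^ (mDepth (u ++ v) i)
            * (if u.count true + 1 - u.count false = i then (1 - t ^ (n + i)) else 1) := by
        intro i _
        rw [mDepth_removal, pow_add]
        congr 1
        split_ifs <;> simp
      rw [Finset.prod_congr rfl hprod, Finset.prod_mul_distrib, Finset.prod_ite_eq]
      have hLu : u.count true + (v.count true + 1) ≤ L := by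
        simpa [List.count_append, List.count_cons] using hL
      have hmem : u.count true + 1 - u.count false ∈ Finset.Icc 1 L := by
        simp only [Finset.mem_Icc]
        constructor <;> omega
      rw [if_pos hmem]
      have : n + (u.count true + 1 - u.count false) = m + 1 := by omega
      rw [this]
      ring


theorem dyck_word_trace
    (t p : ℝ) (ht0 : 0 < t) (ht1 : t < 1) (hp : 0 < p)
    (ℓ : ℕ) (w : List Bool)
    (hlen : w.length = 2 * ℓ) (hups : w.count true = ℓ)
    (hpre : ∀ j : ℕ, (w.take j).count false ≤ (w.take j).count true) :
    (∀ n : ℕ,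
        ((Ow t w * kPow t p) (Finsupp.single n 1)) n
        = t ^ (p * (n : ℝ)) * ∏ i ∈ Finset.Icc 1 ℓ, (1 - t ^ (n + i)) ^ (mDepth w i))
    ∧ HasSum (fun n : ℕ => ((Ow t w * kPow t p) (Finsupp.single n 1)) n)
        (∑' n : ℕ,
          t ^ (p * (n : ℝ)) * ∏ i ∈ Finset.Icc 1 ℓ, (1 - t ^ (n + i)) ^ (mDepth w i)) := by
  have hct := count_tf_length w
  have hbal : w.count true = w.count false := by omega
  have coeff : ∀ n : ℕ, ((Ow t w * kPow t p) (Finsupp.single n 1)) n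
      = t ^ (p * (n : ℝ)) * ∏ i ∈ Finset.Icc 1 ℓ, (1 - t ^ (n + i)) ^ (mDepth w i) := by
    intro n
    rw [Module.End.mul_apply, kPow_single, map_smul,
      lemB t ht0 ht1 w.length w le_rfl hbal hpre ℓ (by omega) n]
    simp [Finsupp.smul_apply, Finsupp.single_eq_same]
  refine ⟨coeff, ?_⟩
  have hfac : ∀ n i : ℕ, (0:ℝ) ≤ 1 - t ^ (n + i) ∧ (1 - t ^ (n + i)) ≤ 1 := by
    intro n i
    have h1 : t ^ (n + i) ≤ 1 := pow_le_one₀ ht0.le ht1.le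
    have h2 : (0:ℝ) ≤ t ^ (n + i) := pow_nonneg ht0.le _
    constructor <;> linarith
  have hprod : ∀ n : ℕ, (0:ℝ) ≤ (∏ i ∈ Finset.Icc 1 ℓ, (1 - t ^ (n + i)) ^ (mDepth w i))
      ∧ (∏ i ∈ Finset.Icc 1 ℓ, (1 - t ^ (n + i)) ^ (mDepth w i)) ≤ 1 := by
    intro n
    constructor
    · exact Finset.prod_nonneg fun i _ => pow_nonneg (hfac n i).1 _
    · exact Finset.prod_le_one (fun i _ => pow_nonneg (hfac n i).1 _)
        (fun i _ => pow_le_one₀ (hfac n i).1 (hfac n i).2)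
  have hrw : ∀ n : ℕ, t ^ (p * (n:ℝ)) = (t ^ p) ^ n := by
    intro n
    rw [Real.rpow_mul ht0.le, Real.rpow_natCast]
  have htp0 : (0:ℝ) ≤ t ^ p := Real.rpow_nonneg ht0.le p
  have htp1 : t ^ p < 1 := Real.rpow_lt_one ht0.le ht1 hp
  have hsummable : Summable (fun n : ℕ =>
      t ^ (p * (n:ℝ)) * ∏ i ∈ Finset.Icc 1 ℓ, (1 - t ^ (n + i)) ^ (mDepth w i)) := by
    refine Summable.of_nonneg_of_le (fun n => ?_) (fun n => ?_)
      (summable_geometric_of_lt_one htp0 htp1)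
    · exact mul_nonneg (by rw [hrw]; positivity) (hprod n).1
    · rw [hrw]
      calc (t ^ p) ^ n * ∏ i ∈ Finset.Icc 1 ℓ, (1 - t ^ (n + i)) ^ (mDepth w i)
          ≤ (t ^ p) ^ n * 1 :=
            mul_le_mul_of_nonneg_left (hprod n).2 (by positivity)
        _ = (t ^ p) ^ n := mul_one _
  have heq : (fun n : ℕ => ((Ow t w * kPow t p) (Finsupp.single n 1)) n)
      = fun n : ℕ => t ^ (p * (n:ℝ)) * ∏ i ∈ Finset.Icc 1 ℓ, (1 - t ^ (n + i)) ^ (mDepth w i) :=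
    funext coeff
  rw [heq]
  exact hsummable.hasSum

end
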